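/- arXiv:2503.05644 — 4 statements merged into one kernel-verified Lean document; each statement's English description precedes it below -/
import Mathlib

section
/- Let β_1,…,β_n be a T-action datum in V. If w ∈ ℂ^n satisfies λw = 0 and β(w) = 0, then w = 0; that is, the pair (λ,β) associated to a T-action datum is T-log-symplectic. -/
open Finset Matrix

noncomputable section

/-- The standard embedding of an integer vector into `ℂⁿ`. -/
def cvec {n : ℕ} (w : Fin n → ℤ) : Fin n → ℂ := fun j => (w j : ℂ)

/-- `J_w = { j : w_j = -1 }`. -/
def Jset {n : ℕ} (w : Fin n → ℤ) : Finset (Fin n) :=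
  Finset.univ.filter (fun j => w j = -1)

/-- The linear map `β : ℂⁿ → V`, `w ↦ ∑ w_j β_j`. -/
def bmap {n : ℕ} {V : Type*} [AddCommGroup V] [Module ℂ V]
    (β : Fin n → V) (w : Fin n → ℂ) : V :=
  ∑ j, w j • β j

/-- The pair `(λ, β)` is T-log-symplectic. -/
def TLogSymp {n : ℕ} {V : Type*} [AddCommGroup V] [Module ℂ V]
    (M : Matrix (Fin n) (Fin n) ℂ) (β : Fin n → V) : Prop :=
  ∀ w : Fin n → ℂ, M.mulVec w = 0 → bmap β w = 0 → w = 0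

/-- The set `W(λ, β)`. -/
def Wset {n : ℕ} {V : Type*} [AddCommGroup V] [Module ℂ V]
    (M : Matrix (Fin n) (Fin n) ℂ) (β : Fin n → V) : Set (Fin n → ℤ) :=
  {w | (∀ j, -1 ≤ w j) ∧ (∀ j, j ∉ Jset w → M.mulVec (cvec w) j = 0) ∧
    bmap β (cvec w) = 0}

/-- The set `S(λ, β)` of smoothable weights. -/
def Sset {n : ℕ} {V : Type*} [AddCommGroup V] [Module ℂ V]
    (M : Matrix (Fin n) (Fin n) ℂ) (β : Fin n → V) : Set (Fin n → ℤ) :=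
  {θ | θ ∈ Wset M β ∧ (Jset θ).card = 2}

/-- `S_m`: sums of exactly `m` elements of `S`, repetitions allowed. -/
def SumOf {n : ℕ} (S : Set (Fin n → ℤ)) (m : ℕ) : Set (Fin n → ℤ) :=
  {w | ∃ l : Multiset (Fin n → ℤ), (∀ x ∈ l, x ∈ S) ∧ Multiset.card l = m ∧ l.sum = w}

/-- `S_{≥ m}`: sums of at least `m` elements of `S`, repetitions allowed. -/
def SumGE {n : ℕ} (S : Set (Fin n → ℤ)) (m : ℕ) : Set (Fin n → ℤ) :=
  {w | ∃ m', m ≤ m' ∧ w ∈ SumOf S m'}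

/-- A vector `w ∈ ℤⁿ` is negatively bordered. -/
def NegBordered {n : ℕ} (w : Fin n → ℤ) : Prop :=
  ∃ j k : Fin n, j < k ∧ w j = -1 ∧ w k = -1 ∧ (∀ i, i < j → w i = 0) ∧
    (∀ i, k < i → w i = 0) ∧ (∀ i, j < i → i < k → 0 ≤ w i)

/-- The Cartan number `a_{b,ξ} = 2⟨b,ξ⟩/⟨b,b⟩`. -/
def cartan {V : Type*} [AddCommGroup V] [Module ℂ V]
    (B : V →ₗ[ℂ] V →ₗ[ℂ] ℂ) (b ξ : V) : ℂ :=
  2 * B b ξ / B b b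

/-- The reflection `s_b(ξ) = ξ - a_{b,ξ} b`. -/
def sRefl {V : Type*} [AddCommGroup V] [Module ℂ V]
    (B : V →ₗ[ℂ] V →ₗ[ℂ] ℂ) (b ξ : V) : V :=
  ξ - cartan B b ξ • b

/-- `reflL B g m = s_{g 0} ∘ s_{g 1} ∘ ⋯ ∘ s_{g (m-1)}`. -/
def reflL {V : Type*} [AddCommGroup V] [Module ℂ V]
    (B : V →ₗ[ℂ] V →ₗ[ℂ] ℂ) (g : ℕ → V) : ℕ → V → V
  | 0, ξ => ξ
  | m + 1, ξ => reflL B g m (sRefl B (g m) ξ)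

/-- `reflR B g m = s_{g (m-1)} ∘ ⋯ ∘ s_{g 1} ∘ s_{g 0}`. -/
def reflR {V : Type*} [AddCommGroup V] [Module ℂ V]
    (B : V →ₗ[ℂ] V →ₗ[ℂ] ℂ) (g : ℕ → V) : ℕ → V → V
  | 0, ξ => ξ
  | m + 1, ξ => sRefl B (g m) (reflR B g m ξ)

/-- Extension of a `Fin n`-indexed family to `ℕ` by zero. -/
def gext {n : ℕ} {V : Type*} [AddCommGroup V] (v : Fin n → V) : ℕ → V :=
  fun t => if h : t < n then v ⟨t, h⟩ else 0

/-- `γ_j = s_{β_1} s_{β_2} ⋯ s_{β_{j-1}} (β_j)`. -/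
def gam {n : ℕ} {V : Type*} [AddCommGroup V] [Module ℂ V]
    (B : V →ₗ[ℂ] V →ₗ[ℂ] ℂ) (β : Fin n → V) (j : Fin n) : V :=
  reflL B (gext β) j.val (β j)

/-- The Poisson coefficient matrix `λ` of a T-action datum: `λ_{jk} = -⟨β_j, β_k⟩` for
`j < k`, `⟨β_j, β_k⟩` for `j > k`, and `0` on the diagonal. -/
def lam {n : ℕ} {V : Type*} [AddCommGroup V] [Module ℂ V]
    (B : V →ₗ[ℂ] V →ₗ[ℂ] ℂ) (β : Fin n → V) : Matrix (Fin n) (Fin n) ℂ :=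
  Matrix.of fun j k =>
    if j < k then -(B (β j) (β k)) else if k < j then B (β j) (β k) else 0

/-- The upper triangular matrix `Q` with `Q_{jj} = 1` and `Q_{jk} = a_{γ_j, γ_k}` for
`j < k`. -/
def Qmat {n : ℕ} {V : Type*} [AddCommGroup V] [Module ℂ V]
    (B : V →ₗ[ℂ] V →ₗ[ℂ] ℂ) (γ : Fin n → V) : Matrix (Fin n) (Fin n) ℂ :=
  Matrix.of fun j k => if j = k then 1 else if j < k then cartan B (γ j) (γ k) else 0

open scoped Classical in
/-- The set `{k ∈ [j+1, n] : γ_k = γ_j}`, whose minimum (when it exists) is `j⁺`. -/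
def plusSet {n : ℕ} {V : Type*} (γ : Fin n → V) (j : Fin n) : Finset (Fin n) :=
  Finset.univ.filter (fun k => j < k ∧ γ k = γ j)

/-- `e_{j⁺} ∈ ℂⁿ`, with the convention `e_{+∞} = 0`. -/
def eplus {n : ℕ} {V : Type*} (γ : Fin n → V) (j : Fin n) : Fin n → ℂ :=
  if h : (plusSet γ j).Nonempty then Pi.single ((plusSet γ j).min' h) 1 else 0

/-- `θ^{(j)} = Q (e_j - e_{j⁺}) ∈ ℂⁿ`. -/
def thetaC {n : ℕ} {V : Type*} [AddCommGroup V] [Module ℂ V]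
    (B : V →ₗ[ℂ] V →ₗ[ℂ] ℂ) (β : Fin n → V) (j : Fin n) : Fin n → ℂ :=
  (Qmat B (gam B β)).mulVec ((Pi.single j 1 : Fin n → ℂ) - eplus (gam B β) j)

/-- The linear map `β : ℂⁿ → V`, `w ↦ ∑ w_j β_j`, as a bundled linear map. -/
def betaLin {n : ℕ} {V : Type*} [AddCommGroup V] [Module ℂ V]
    (β : Fin n → V) : (Fin n → ℂ) →ₗ[ℂ] V where
  toFun w := ∑ j, w j • β j
  map_add' x y := by simp [add_smul, Finset.sum_add_distrib]
  map_smul' a x := by simp [Finset.smul_sum, mul_smul]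

/-!
Pair the `j`-th row of `λ w` with `⟨β_j, β(w)⟩`: the terms with `k > j` cancel, so
`(λ w)_j + ⟨β_j, β(w)⟩ = w_j ⟨β_j, β_j⟩ + 2 ∑_{k < j} w_k ⟨β_j, β_k⟩`.
If `λ w = 0` and `β(w) = 0`, strong induction on `j` and `⟨β_j, β_j⟩ ≠ 0` give `w_j = 0`.
-/

theorem lam_mulVec_add_apply_bmap {n : ℕ} {V : Type*} [AddCommGroup V] [Module ℂ V]
    (B : V →ₗ[ℂ] V →ₗ[ℂ] ℂ) (β : Fin n → V) (w : Fin n → ℂ) (j : Fin n) :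
    (lam B β *ᵥ w) j + B (β j) (bmap β w) =
      w j * B (β j) (β j) + 2 * ∑ k ∈ Iio j, w k * B (β j) (β k) := by
  have hterm : ∀ k, lam B β j k * w k + w k * B (β j) (β k) =
      (if k = j then w j * B (β j) (β j) else 0) +
        if k < j then 2 * (w k * B (β j) (β k)) else 0 := by
    intro k
    rcases lt_trichotomy k j with h | rfl | h
    · simp [lam, h, h.ne, not_lt.2 h.le]
      ring
    · simp [lam]
    · simp [lam, h, h.ne', not_lt.2 h.le]
      ring
  calc (lam B β *ᵥ w) j + B (β j) (bmap β w)
      = ∑ k, (lam B β j k * w k + w k * B (β j) (β k)) := by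
        simp only [mulVec, dotProduct, bmap, map_sum, map_smul, smul_eq_mul, sum_add_distrib]
    _ = w j * B (β j) (β j) + 2 * ∑ k ∈ Iio j, w k * B (β j) (β k) := by
        rw [sum_congr rfl fun k _ => hterm k, sum_add_distrib, sum_ite_eq', if_pos (mem_univ j),
          ← sum_filter, mul_sum, filter_gt_eq_Iio]

theorem stmt9_general (n : ℕ) {V : Type*} [AddCommGroup V] [Module ℂ V]
    (B : V →ₗ[ℂ] V →ₗ[ℂ] ℂ)
    (β : Fin n → V) (hβ : ∀ j, B (β j) (β j) ≠ 0) :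
    TLogSymp (lam B β) β := by
  intro w hM hb
  funext j
  induction j using WellFoundedLT.induction with
  | _ j ih =>
    have h := lam_mulVec_add_apply_bmap B β w j
    rw [hM, hb, sum_eq_zero fun k hk => by simp [ih k (mem_Iio.1 hk)]] at h
    simpa [hβ j] using h

theorem stmt9 (n : ℕ) (hn : 0 < n) {V : Type*} [AddCommGroup V] [Module ℂ V]
    (B : V →ₗ[ℂ] V →ₗ[ℂ] ℂ) (hBsymm : ∀ x y, B x y = B y x)
    (β : Fin n → V) (hβ : ∀ j, B (β j) (β j) ≠ 0) :
    TLogSymp (lam B β) β :=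
  stmt9_general n B β hβ
end
end

section
/- Let β_1,…,β_n be a T-action datum in V. Then for every k ∈ [1,n]: γ_k = β_k + Σ_{j=1}^{k−1} a_{γ_j,γ_k} β_j, and β_k = γ_k + Σ_{j=1}^{k−1} a_{β_j,β_k} γ_j. -/
open Finset Matrix

noncomputable section

/-!
Write `w_m = s_{g_0} ⋯ s_{g_{m-1}}` (`reflL`), so that `γ_m = w_m (g_m)` for `g = β`. Since
`w_{m+1} v = w_m (v - a_{g_m,v} g_m) = w_m v - a_{g_m,v} γ_m`, induction gives
`w_m v = v - ∑_{t<m} a_{g_t,v} γ_t`, the second identity at `v = β_k`. For the first, `w_m`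
preserves Cartan numbers and `a_{b, s_b x} = -a_{b,x}`, so `a_{g_m,x} = -a_{γ_m, w_{m+1} x}`;
the same induction then gives `w_m x = x + ∑_{t<m} a_{γ_t, w_m x} g_t`, the first identity at
`x = β_k`.
-/

namespace Reflection

variable {V : Type*} [AddCommGroup V] [Module ℂ V] (B : V →ₗ[ℂ] V →ₗ[ℂ] ℂ)

lemma cartan_sub (b x y : V) : cartan B b (x - y) = cartan B b x - cartan B b y := by
  simp only [cartan, map_sub, mul_sub, sub_div]

lemma cartan_smul (b : V) (c : ℂ) (x : V) : cartan B b (c • x) = c * cartan B b x := by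
  simp only [cartan, map_smul, smul_eq_mul]
  ring

lemma cartan_self {b : V} (hb : B b b ≠ 0) : cartan B b b = 2 := by
  rw [cartan, mul_div_assoc, div_self hb, mul_one]

lemma cartan_sRefl_self {b : V} (hb : B b b ≠ 0) (x : V) :
    cartan B b (sRefl B b x) = -cartan B b x := by
  rw [sRefl, cartan_sub, cartan_smul, cartan_self B hb]
  ring

lemma sRefl_sub (b x y : V) : sRefl B b (x - y) = sRefl B b x - sRefl B b y := by
  simp only [sRefl, cartan_sub, sub_smul]
  abel

lemma sRefl_smul (b : V) (c : ℂ) (x : V) : sRefl B b (c • x) = c • sRefl B b x := by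
  simp only [sRefl, cartan_smul, smul_sub, smul_smul]

lemma apply_sRefl_sRefl (hB : ∀ x y, B x y = B y x) {b : V} (hb : B b b ≠ 0) (x y : V) :
    B (sRefl B b x) (sRefl B b y) = B x y := by
  simp only [sRefl, cartan, map_sub, map_smul, LinearMap.sub_apply, LinearMap.smul_apply,
    smul_eq_mul, hB x b]
  field_simp
  ring

variable (g : ℕ → V)

lemma reflL_sub (m : ℕ) (x y : V) : reflL B g m (x - y) = reflL B g m x - reflL B g m y := by
  induction m generalizing x y with
  | zero => rfl
  | succ m ih => rw [reflL, sRefl_sub, ih]; rfl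

lemma reflL_smul (m : ℕ) (c : ℂ) (x : V) : reflL B g m (c • x) = c • reflL B g m x := by
  induction m generalizing x with
  | zero => rfl
  | succ m ih => rw [reflL, sRefl_smul, ih]; rfl

lemma apply_reflL_reflL (hB : ∀ x y, B x y = B y x) {m : ℕ}
    (hg : ∀ t < m, B (g t) (g t) ≠ 0) (x y : V) :
    B (reflL B g m x) (reflL B g m y) = B x y := by
  induction m generalizing x y with
  | zero => rfl
  | succ m ih =>
    rw [reflL, reflL, ih (fun t ht => hg t (by omega)), apply_sRefl_sRefl B hB (hg m (by omega))]

lemma cartan_reflL_reflL (hB : ∀ x y, B x y = B y x) {m : ℕ}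
    (hg : ∀ t < m, B (g t) (g t) ≠ 0) (x y : V) :
    cartan B (reflL B g m x) (reflL B g m y) = cartan B x y := by
  simp only [cartan, apply_reflL_reflL B g hB hg]

lemma reflL_eq_sub_sum (m : ℕ) (v : V) :
    reflL B g m v = v - ∑ t ∈ range m, cartan B (g t) v • reflL B g t (g t) := by
  induction m with
  | zero => simp [reflL]
  | succ m ih =>
    rw [reflL, sRefl, reflL_sub, reflL_smul, ih, sum_range_succ]
    abel

lemma reflL_eq_add_sum (hB : ∀ x y, B x y = B y x) {m : ℕ}
    (hg : ∀ t < m, B (g t) (g t) ≠ 0) (x : V) :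
    reflL B g m x =
      x + ∑ t ∈ range m, cartan B (reflL B g t (g t)) (reflL B g m x) • g t := by
  induction m generalizing x with
  | zero => simp [reflL]
  | succ m ih =>
    have hgm := hg m (by omega)
    have hc : cartan B (reflL B g m (g m)) (reflL B g m (sRefl B (g m) x))
        = -cartan B (g m) x := by
      rw [cartan_reflL_reflL B g hB (fun t ht => hg t (by omega)), cartan_sRefl_self B hgm]
    rw [sum_range_succ, reflL, hc]
    conv_lhs => rw [ih (fun t ht => hg t (by omega))]
    rw [sRefl, neg_smul]
    abel

end Reflection

lemma sum_filter_lt_eq_sum_range {M : Type*} [AddCommMonoid M] {n : ℕ} (k : Fin n)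
    (f : ℕ → M) : ∑ j ∈ univ.filter (· < k), f j = ∑ t ∈ range k, f t := by
  refine sum_bij (fun j _ => j) (fun j hj => by simpa using hj) (fun _ _ _ _ => Fin.ext)
    (fun t ht => ?_) (fun _ _ => rfl)
  have htk := mem_range.mp ht
  exact ⟨⟨t, htk.trans k.isLt⟩, mem_filter.mpr ⟨mem_univ _, htk⟩, rfl⟩

open Reflection in
theorem stmt10_general (n : ℕ) {V : Type*} [AddCommGroup V] [Module ℂ V]
    (B : V →ₗ[ℂ] V →ₗ[ℂ] ℂ) (hBsymm : ∀ x y, B x y = B y x)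
    (β : Fin n → V) (hβ : ∀ j, B (β j) (β j) ≠ 0) :
    ∀ k : Fin n,
      gam B β k = β k + ∑ j ∈ Finset.univ.filter (fun j => j < k),
        cartan B (gam B β j) (gam B β k) • β j ∧
      β k = gam B β k + ∑ j ∈ Finset.univ.filter (fun j => j < k),
        cartan B (β j) (β k) • gam B β j := by
  intro k
  set g := gext β
  have hgβ : ∀ j : Fin n, g j = β j := fun j => by simp [g, gext]
  have hgam : ∀ j : Fin n, gam B β j = reflL B g j (g j) := fun j => by rw [gam, hgβ]
  have hgk : ∀ t < (k : ℕ), B (g t) (g t) ≠ 0 := fun t ht => by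
    simpa [g, gext, ht.trans k.isLt] using hβ ⟨t, ht.trans k.isLt⟩
  simp only [hgam, ← hgβ]
  rw [sum_filter_lt_eq_sum_range k
      (fun t => cartan B (reflL B g t (g t)) (reflL B g k (g k)) • g t),
    sum_filter_lt_eq_sum_range k (fun t => cartan B (g t) (g k) • reflL B g t (g t))]
  exact ⟨reflL_eq_add_sum B g hBsymm hgk _,
    sub_eq_iff_eq_add.mp (reflL_eq_sub_sum B g k _).symm⟩

theorem stmt10 (n : ℕ) (hn : 0 < n) {V : Type*} [AddCommGroup V] [Module ℂ V]
    (B : V →ₗ[ℂ] V →ₗ[ℂ] ℂ) (hBsymm : ∀ x y, B x y = B y x)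
    (β : Fin n → V) (hβ : ∀ j, B (β j) (β j) ≠ 0) :
    ∀ k : Fin n,
      gam B β k = β k + ∑ j ∈ Finset.univ.filter (fun j => j < k),
        cartan B (gam B β j) (gam B β k) • β j ∧
      β k = gam B β k + ∑ j ∈ Finset.univ.filter (fun j => j < k),
        cartan B (β j) (β k) • gam B β j :=
  stmt10_general n B hBsymm β hβ
end
end

section
/- Let β_1,…,β_n be a T-action datum in V. Then every element of S(λ,β) is negatively bordered, the set S(λ,β) is linearly independent over ℂ, and S(λ,β) satisfies condition (W1): no sum of two or more elements of S(λ,β) (repetitions allowed) has all entries ≥ −1 and at most one entry equal to −1. -/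
open Finset Matrix

noncomputable section

/-!
Writing `P_i = ∑_{k < i} θ_k β_k`, the relation `β(θ) = 0` turns the `i`-th entry of `λθ` into
`⟨β_i, 2 P_i + θ_i β_i⟩`. So for `θ ∈ W(λ, β)` every coordinate outside `J_θ` is determined by
the earlier ones through `θ_i λ_i = -2 ⟨β_i, P_i⟩`. Reading this from the left and, using
`β(θ) = 0`, from the right shows that `θ` vanishes before its first and after its last `-1`, and
that `P_k = β_k` at the last `-1`. For a smoothable weight with `J_θ = {j, k}` this gives
`θ_i = -1 ↔ i = j ∨ P_i = β_i`, so `θ` is determined by `j`: the elements of `S(λ, β)` are in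
echelon form with distinct pivots, hence linearly independent. Finally, in a sum of negatively
bordered vectors the leftmost and the rightmost `-1` of the summands survive, which gives (W1).
-/

lemma linearIndependent_of_pivot {ι κ R : Type*} [LinearOrder κ] [Ring R] [NoZeroDivisors R]
    (v : ι → κ → R) (p : ι → κ) (hp : Function.Injective p) (hpivot : ∀ i, v i (p i) ≠ 0)
    (hzero : ∀ i m, m < p i → v i m = 0) : LinearIndependent R v := by
  classical
  rw [linearIndependent_iff']
  intro s g hsum
  by_contra! hg
  obtain ⟨i₀, hi₀, hmin⟩ :=
    (s.filter (g · ≠ 0)).exists_min_image p (Finset.filter_nonempty_iff.mpr hg)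
  rw [Finset.mem_filter] at hi₀
  have hval := congrFun hsum (p i₀)
  rw [Finset.sum_apply, Finset.sum_eq_single i₀] at hval
  · exact mul_ne_zero hi₀.2 (hpivot i₀) hval
  · intro i hi hne
    by_cases hgi : g i = 0
    · simp [hgi]
    · have hlt : p i₀ < p i :=
        (hmin i (Finset.mem_filter.mpr ⟨hi, hgi⟩)).lt_of_ne fun h => hne (hp h).symm
      simp [hzero i _ hlt]
  · exact fun h => (h hi₀.1).elim

lemma mem_Jset {n : ℕ} {θ : Fin n → ℤ} {i : Fin n} : i ∈ Jset θ ↔ θ i = -1 := by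
  simp [Jset]

section SumOfNegBordered

variable {n : ℕ} {θ : Fin n → ℤ} {i : Fin n}

lemma NegBordered.apply_nonpos_of_le (hθ : NegBordered θ) (hi : ∀ m, θ m = -1 → i ≤ m) :
    θ i ≤ 0 := by
  obtain ⟨j, k, -, hj, -, hbefore, -, -⟩ := hθ
  rcases (hi j hj).lt_or_eq with h | rfl
  · exact (hbefore i h).le
  · omega

lemma NegBordered.apply_nonpos_of_ge (hθ : NegBordered θ) (hi : ∀ m, θ m = -1 → m ≤ i) :
    θ i ≤ 0 := by
  obtain ⟨j, k, -, -, hk, -, hafter, -⟩ := hθ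
  rcases (hi k hk).lt_or_eq with h | rfl
  · exact (hafter i h).le
  · omega

lemma multiset_sum_apply_le_neg_one (l : Multiset (Fin n → ℤ)) (hle : ∀ θ ∈ l, θ i ≤ 0)
    (hθ : θ ∈ l) (hi : θ i = -1) : l.sum i ≤ -1 := by
  have hneg : -θ i ≤ (l.map fun θ => -θ i).sum :=
    Multiset.single_le_sum (by simpa using hle) _ (Multiset.mem_map_of_mem _ hθ)
  rw [Multiset.sum_map_neg, ← Pi.multiset_sum_apply] at hneg
  omega

lemma two_le_card_Jset_multiset_sum (l : Multiset (Fin n → ℤ)) (hl : l ≠ 0)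
    (hneg : ∀ θ ∈ l, NegBordered θ) (hge : ∀ i, -1 ≤ l.sum i) : 2 ≤ (Jset l.sum).card := by
  classical
  obtain ⟨θ₀, hθ₀⟩ := Multiset.exists_mem_of_ne_zero hl
  obtain ⟨j, k, hjk, hj, hk, -⟩ := hneg θ₀ hθ₀
  set F : Finset (Fin n) := {i | ∃ θ ∈ l, θ i = -1}
  have hjF : j ∈ F := Finset.mem_filter.mpr ⟨Finset.mem_univ _, θ₀, hθ₀, hj⟩
  have hkF : k ∈ F := Finset.mem_filter.mpr ⟨Finset.mem_univ _, θ₀, hθ₀, hk⟩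
  have hF : F.Nonempty := ⟨j, hjF⟩
  have hmem : ∀ i ∈ F, (∀ θ ∈ l, θ i ≤ 0) → i ∈ Jset l.sum := by
    intro i hi hle
    obtain ⟨θ, hθ, hθi⟩ : ∃ θ ∈ l, θ i = -1 := by simpa [F] using hi
    have := multiset_sum_apply_le_neg_one l hle hθ hθi
    exact mem_Jset.mpr (le_antisymm this (hge i))
  have hmin : F.min' hF ∈ Jset l.sum := hmem _ (F.min'_mem hF) fun θ hθ =>
    (hneg θ hθ).apply_nonpos_of_le fun m hm =>
      F.min'_le m (Finset.mem_filter.mpr ⟨Finset.mem_univ _, θ, hθ, hm⟩)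
  have hmax : F.max' hF ∈ Jset l.sum := hmem _ (F.max'_mem hF) fun θ hθ =>
    (hneg θ hθ).apply_nonpos_of_ge fun m hm =>
      F.le_max' m (Finset.mem_filter.mpr ⟨Finset.mem_univ _, θ, hθ, hm⟩)
  have hlt : F.min' hF < F.max' hF :=
    ((F.min'_le j hjF).trans_lt hjk).trans_le (F.le_max' k hkF)
  exact Finset.one_lt_card.mpr ⟨_, hmin, _, hmax, hlt.ne⟩

end SumOfNegBordered

section PartialSums

variable {n : ℕ} {V : Type*} [AddCommGroup V] [Module ℂ V]

def partialSum (β : Fin n → V) (w : Fin n → ℂ) (i : Fin n) : V :=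
  ∑ k ∈ Iio i, w k • β k

lemma bmap_eq_partialSum_add (β : Fin n → V) (w : Fin n → ℂ) (i : Fin n) :
    bmap β w = partialSum β w i + w i • β i + ∑ k ∈ Ioi i, w k • β k := by
  classical
  rw [bmap, ← Finset.sum_filter_add_sum_filter_not univ (· ≤ i), filter_ge_eq_Iic,
    ← Iio_insert, Finset.sum_insert Finset.notMem_Iio_self, partialSum, add_comm (w i • β i)]
  congr 2
  ext k
  simp

lemma lam_mulVec_apply (B : V →ₗ[ℂ] V →ₗ[ℂ] ℂ) (β : Fin n → V) (w : Fin n → ℂ) (i : Fin n) :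
    (lam B β *ᵥ w) i = B (β i) (partialSum β w i - ∑ k ∈ Ioi i, w k • β k) := by
  classical
  have hentry : ∀ k, lam B β i k * w k =
      (if k < i then w k * B (β i) (β k) else 0) - (if i < k then w k * B (β i) (β k) else 0) := by
    intro k
    rcases lt_trichotomy k i with h | rfl | h
    · simp [lam, h, h.not_gt, mul_comm]
    · simp [lam]
    · simp [lam, h, h.not_gt, mul_comm]
  simp only [mulVec, dotProduct, hentry, Finset.sum_sub_distrib, ← Finset.sum_filter,
    filter_gt_eq_Iio, filter_lt_eq_Ioi, partialSum, map_sub, map_sum, map_smul, smul_eq_mul]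

lemma lam_mulVec_apply_of_bmap_eq_zero (B : V →ₗ[ℂ] V →ₗ[ℂ] ℂ) (β : Fin n → V)
    {w : Fin n → ℂ} (hw : bmap β w = 0) (i : Fin n) :
    (lam B β *ᵥ w) i = 2 * B (β i) (partialSum β w i) + w i * B (β i) (β i) := by
  have hsuffix : ∑ k ∈ Ioi i, w k • β k = -(partialSum β w i + w i • β i) :=
    eq_neg_of_add_eq_zero_right (by rw [← bmap_eq_partialSum_add, hw])
  rw [lam_mulVec_apply, hsuffix]
  simp only [sub_neg_eq_add, map_add, map_smul, smul_eq_mul]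
  ring

end PartialSums

section Smoothable

variable {n : ℕ} {V : Type*} [AddCommGroup V] [Module ℂ V] {B : V →ₗ[ℂ] V →ₗ[ℂ] ℂ}
  {β : Fin n → V} {θ θ' : Fin n → ℤ} {i j k : Fin n}

lemma coe_mul_eq_of_mem_Wset (hθ : θ ∈ Wset (lam B β) β) (hi : θ i ≠ -1) :
    (θ i : ℂ) * B (β i) (β i) = -2 * B (β i) (partialSum β (cvec θ) i) := by
  have h := hθ.2.1 i (mt mem_Jset.mp hi)
  rw [lam_mulVec_apply_of_bmap_eq_zero B β hθ.2.2, cvec] at h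
  linear_combination h

lemma exists_Jset_eq_pair {M : Matrix (Fin n) (Fin n) ℂ} (hθ : θ ∈ Sset M β) :
    ∃ j k, j < k ∧ Jset θ = {j, k} := by
  obtain ⟨a, b, hab, hJ⟩ := Finset.card_eq_two.mp hθ.2
  rcases hab.lt_or_gt with h | h
  · exact ⟨a, b, h, hJ⟩
  · exact ⟨b, a, h, hJ.trans (Finset.pair_comm a b)⟩

variable (hβ : ∀ j, B (β j) (β j) ≠ 0)
include hβ

lemma apply_eq_zero_of_forall_le_ne (hθ : θ ∈ Wset (lam B β) β) :
    ∀ i, (∀ m ≤ i, θ m ≠ -1) → θ i = 0 := by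
  intro i
  induction i using WellFoundedLT.induction with
  | _ i ih =>
    intro hi
    have hP : partialSum β (cvec θ) i = 0 := Finset.sum_eq_zero fun m hm => by
      have hmi := Finset.mem_Iio.mp hm
      rw [cvec, ih m hmi fun m' hm' => hi m' (hm'.trans hmi.le)]
      simp
    have h := coe_mul_eq_of_mem_Wset hθ (hi i le_rfl)
    rw [hP, map_zero, mul_zero] at h
    exact_mod_cast (mul_eq_zero.mp h).resolve_right (hβ i)

lemma apply_eq_zero_of_forall_ge_ne (hθ : θ ∈ Wset (lam B β) β) :
    ∀ i, (∀ m ≥ i, θ m ≠ -1) → θ i = 0 := by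
  intro i
  induction i using WellFoundedGT.induction with
  | _ i ih =>
    intro hi
    have hsuffix : ∑ m ∈ Ioi i, cvec θ m • β m = 0 := Finset.sum_eq_zero fun m hm => by
      have him := Finset.mem_Ioi.mp hm
      rw [cvec, ih m him fun m' hm' => hi m' (him.le.trans hm')]
      simp
    have hP : partialSum β (cvec θ) i = -(cvec θ i • β i) := by
      have h := bmap_eq_partialSum_add β (cvec θ) i
      rw [hθ.2.2, hsuffix, add_zero] at h
      exact eq_neg_of_add_eq_zero_left h.symm
    have h := coe_mul_eq_of_mem_Wset hθ (hi i le_rfl)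
    rw [hP, map_neg, map_smul, smul_eq_mul, cvec] at h
    have h0 : (θ i : ℂ) * B (β i) (β i) = 0 := by linear_combination -h
    exact_mod_cast (mul_eq_zero.mp h0).resolve_right (hβ i)

lemma apply_eq_neg_one_of_partialSum_eq (hθ : θ ∈ Wset (lam B β) β)
    (hP : partialSum β (cvec θ) i = β i) : θ i = -1 := by
  by_contra hi
  have h := coe_mul_eq_of_mem_Wset hθ hi
  rw [hP] at h
  have : θ i = -2 := by exact_mod_cast mul_right_cancel₀ (hβ i) h
  have := hθ.1 i
  omega

lemma apply_eq_zero_of_lt_of_Jset_eq_pair (hθ : θ ∈ Wset (lam B β) β) (hJ : Jset θ = {j, k})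
    (hjk : j < k) (hi : i < j) : θ i = 0 := by
  refine apply_eq_zero_of_forall_le_ne hβ hθ i fun m hm => ?_
  rw [Ne, ← mem_Jset, hJ, Finset.mem_insert, Finset.mem_singleton]
  rintro (rfl | rfl) <;> order

lemma apply_eq_zero_of_gt_of_Jset_eq_pair (hθ : θ ∈ Wset (lam B β) β) (hJ : Jset θ = {j, k})
    (hjk : j < k) (hi : k < i) : θ i = 0 := by
  refine apply_eq_zero_of_forall_ge_ne hβ hθ i fun m hm => ?_
  rw [Ne, ← mem_Jset, hJ, Finset.mem_insert, Finset.mem_singleton]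
  rintro (rfl | rfl) <;> order

lemma negBordered_of_Jset_eq_pair (hθ : θ ∈ Wset (lam B β) β) (hJ : Jset θ = {j, k})
    (hjk : j < k) : NegBordered θ := by
  have hneg : ∀ m, θ m = -1 ↔ m = j ∨ m = k := by simp [← mem_Jset, hJ]
  refine ⟨j, k, hjk, (hneg j).mpr (.inl rfl), (hneg k).mpr (.inr rfl),
    fun i => apply_eq_zero_of_lt_of_Jset_eq_pair hβ hθ hJ hjk,
    fun i => apply_eq_zero_of_gt_of_Jset_eq_pair hβ hθ hJ hjk, fun i hji hik => ?_⟩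
  have hi : θ i ≠ -1 := by
    rw [Ne, hneg]
    rintro (rfl | rfl) <;> order
  have := hθ.1 i
  omega

lemma partialSum_eq_of_Jset_eq_pair (hθ : θ ∈ Wset (lam B β) β) (hJ : Jset θ = {j, k})
    (hjk : j < k) : partialSum β (cvec θ) k = β k := by
  have hsuffix : ∑ m ∈ Ioi k, cvec θ m • β m = 0 := Finset.sum_eq_zero fun m hm => by
    rw [cvec, apply_eq_zero_of_gt_of_Jset_eq_pair hβ hθ hJ hjk (Finset.mem_Ioi.mp hm)]
    simp
  have h := bmap_eq_partialSum_add β (cvec θ) k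
  have hk : θ k = -1 := mem_Jset.mp (by simp [hJ])
  rw [hθ.2.2, hsuffix, add_zero, cvec, hk] at h
  push_cast at h
  rw [neg_one_smul] at h
  exact add_neg_eq_zero.mp h.symm

lemma apply_eq_neg_one_iff_of_Jset_eq_pair (hθ : θ ∈ Wset (lam B β) β) (hJ : Jset θ = {j, k})
    (hjk : j < k) : θ i = -1 ↔ i = j ∨ partialSum β (cvec θ) i = β i := by
  constructor
  · intro hi
    rw [← mem_Jset, hJ, Finset.mem_insert, Finset.mem_singleton] at hi
    rcases hi with rfl | rfl
    · exact .inl rfl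
    · exact .inr (partialSum_eq_of_Jset_eq_pair hβ hθ hJ hjk)
  · rintro (rfl | hP)
    · exact mem_Jset.mp (by simp [hJ])
    · exact apply_eq_neg_one_of_partialSum_eq hβ hθ hP

lemma eq_of_Jset_eq_pair {k' : Fin n} (hθ : θ ∈ Wset (lam B β) β)
    (hθ' : θ' ∈ Wset (lam B β) β) (hJ : Jset θ = {j, k}) (hjk : j < k)
    (hJ' : Jset θ' = {j, k'}) (hjk' : j < k') : θ = θ' := by
  funext i
  induction i using WellFoundedLT.induction with
  | _ i ih =>
    have hP : partialSum β (cvec θ) i = partialSum β (cvec θ') i :=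
      Finset.sum_congr rfl fun m hm => by rw [cvec, cvec, ih m (Finset.mem_Iio.mp hm)]
    have hiff := apply_eq_neg_one_iff_of_Jset_eq_pair (i := i) hβ hθ hJ hjk
    have hiff' := apply_eq_neg_one_iff_of_Jset_eq_pair (i := i) hβ hθ' hJ' hjk'
    rw [← hP] at hiff'
    by_cases h : i = j ∨ partialSum β (cvec θ) i = β i
    · rw [hiff.mpr h, hiff'.mpr h]
    · have hmul := coe_mul_eq_of_mem_Wset hθ (mt hiff.mp h)
      rw [hP, ← coe_mul_eq_of_mem_Wset hθ' (mt hiff'.mp h)] at hmul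
      exact_mod_cast mul_right_cancel₀ (hβ i) hmul

end Smoothable

theorem stmt13_general (n : ℕ) {V : Type*} [AddCommGroup V] [Module ℂ V]
    (B : V →ₗ[ℂ] V →ₗ[ℂ] ℂ)
    (β : Fin n → V) (hβ : ∀ j, B (β j) (β j) ≠ 0) :
    (∀ θ ∈ Sset (lam B β) β, NegBordered θ) ∧
    LinearIndependent ℂ (fun θ : Sset (lam B β) β => cvec (θ : Fin n → ℤ)) ∧
    (∀ w ∈ SumGE (Sset (lam B β) β) 2,
      ¬((∀ j, -1 ≤ w j) ∧ (Jset w).card ≤ 1)) := by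
  have hneg : ∀ θ ∈ Sset (lam B β) β, NegBordered θ := fun θ hθ => by
    obtain ⟨j, k, hjk, hJ⟩ := exists_Jset_eq_pair hθ
    exact negBordered_of_Jset_eq_pair hβ hθ.1 hJ hjk
  refine ⟨hneg, ?_, ?_⟩
  · choose j k hjk hJ using fun θ : Sset (lam B β) β => exists_Jset_eq_pair θ.2
    refine linearIndependent_of_pivot _ j (fun θ θ' h => ?_) (fun θ => ?_) (fun θ m hm => ?_)
    · exact Subtype.ext <|
        eq_of_Jset_eq_pair hβ θ.2.1 θ'.2.1 (hJ θ) (hjk θ) (h ▸ hJ θ') (h ▸ hjk θ')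
    · have : (θ : Fin n → ℤ) (j θ) = -1 := mem_Jset.mp (by simp [hJ θ])
      simp [cvec, this]
    · simp [cvec, apply_eq_zero_of_lt_of_Jset_eq_pair hβ θ.2.1 (hJ θ) (hjk θ) hm]
  · rintro w ⟨m, hm, l, hl, hcard, rfl⟩ ⟨hge, hcard1⟩
    have hl0 : l ≠ 0 := by
      rintro rfl
      rw [Multiset.card_zero] at hcard
      omega
    have := two_le_card_Jset_multiset_sum l hl0 (fun θ hθ => hneg θ (hl θ hθ)) hge
    omega

theorem stmt13 (n : ℕ) (hn : 0 < n) {V : Type*} [AddCommGroup V] [Module ℂ V]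
    (B : V →ₗ[ℂ] V →ₗ[ℂ] ℂ) (hBsymm : ∀ x y, B x y = B y x)
    (β : Fin n → V) (hβ : ∀ j, B (β j) (β j) ≠ 0) :
    (∀ θ ∈ Sset (lam B β) β, NegBordered θ) ∧
    LinearIndependent ℂ (fun θ : Sset (lam B β) β => cvec (θ : Fin n → ℤ)) ∧
    (∀ w ∈ SumGE (Sset (lam B β) β) 2,
      ¬((∀ j, -1 ≤ w j) ∧ (Jset w).card ≤ 1)) :=
  stmt13_general n B β hβ
end
end

section
/- Let β_1,…,β_n be a distinguished T-action datum in V. Then the family {θ^{(j)} : j ∈ J} is a basis of the ℂ-vector space ker β = {w ∈ ℂ^n : Σ_{j=1}^n w_j β_j = 0}. -/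
open Finset Matrix

noncomputable section

/-
Write `β(w) = ∑ w_j β_j` and `γ(w) = ∑ w_j γ_j`. Unwinding the reflections in
`γ_k = s_{β_1} ⋯ s_{β_{k-1}} β_k` gives `γ_k = β_k + ∑_{j<k} a_{γ_j,γ_k} β_j`, i.e. `β ∘ Q = γ`
as maps `ℂⁿ → V`; since `Q` is unitriangular it is invertible, so `Q` maps `ker γ` onto `ker β`
and `θ^{(j)} = Q (e_j - e_{j⁺})`. It remains to see that the vectors `e_j - e_{j⁺}` (`j ∈ J`) form a
basis of `ker γ`. They lie in `ker γ` because `γ_j = γ_{j⁺}`, and they are linearly independent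
because their `J × J` coordinate matrix is unitriangular (`j < j⁺`). Finally the indices outside
`J` are the last occurrences of the distinct values of `γ`, so, the distinct values being linearly
independent, `dim ker γ = n - #{distinct γ_j} = #J`.
-/

section Reflection

variable {V : Type*} [AddCommGroup V] [Module ℂ V] {B : V →ₗ[ℂ] V →ₗ[ℂ] ℂ}

theorem apply_sRefl_sRefl (hB : ∀ x y, B x y = B y x) {b : V} (hb : B b b ≠ 0) (x y : V) :
    B (sRefl B b x) (sRefl B b y) = B x y := by
  simp only [sRefl, cartan, map_sub, LinearMap.sub_apply, map_smul, LinearMap.smul_apply,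
    smul_eq_mul]
  field_simp
  rw [hB x b]
  ring

theorem cartan_sRefl_right {b : V} (hb : B b b ≠ 0) (ξ : V) :
    cartan B b (sRefl B b ξ) = -cartan B b ξ := by
  simp only [sRefl, cartan, map_sub, map_smul, smul_eq_mul]
  field_simp
  ring

variable {g : ℕ → V} {m : ℕ}

theorem apply_reflL_reflL (hB : ∀ x y, B x y = B y x) (hg : ∀ i < m, B (g i) (g i) ≠ 0)
    (x y : V) : B (reflL B g m x) (reflL B g m y) = B x y := by
  induction m generalizing x y with
  | zero => rfl
  | succ m ih =>
    rw [reflL, reflL, ih (fun i hi => hg i (by omega)), apply_sRefl_sRefl hB (hg m m.lt_succ_self)]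

theorem cartan_reflL_reflL (hB : ∀ x y, B x y = B y x) (hg : ∀ i < m, B (g i) (g i) ≠ 0)
    (x y : V) : cartan B (reflL B g m x) (reflL B g m y) = cartan B x y := by
  simp only [cartan, apply_reflL_reflL hB hg]

theorem reflL_eq_add_sum (hB : ∀ x y, B x y = B y x) (hg : ∀ i < m, B (g i) (g i) ≠ 0)
    (ξ : V) : reflL B g m ξ =
      ξ + ∑ i ∈ range m, cartan B (reflL B g i (g i)) (reflL B g m ξ) • g i := by
  induction m generalizing ξ with
  | zero => simp [reflL]
  | succ m ih =>
    have hg' : ∀ i < m, B (g i) (g i) ≠ 0 := fun i hi => hg i (by omega)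
    -- by invariance under `reflL B g m`, the new coefficient is `a_{g m, s_{g m} ξ}`
    have hlast : cartan B (reflL B g m (g m)) (reflL B g (m + 1) ξ) = -cartan B (g m) ξ := by
      rw [reflL, cartan_reflL_reflL hB hg', cartan_sRefl_right (hg m m.lt_succ_self)]
    rw [sum_range_succ, hlast]
    conv_lhs => rw [reflL, ih hg']
    rw [← reflL, sRefl, neg_smul]
    abel

end Reflection

section Datum

variable {n : ℕ} {V : Type*} [AddCommGroup V] [Module ℂ V] {B : V →ₗ[ℂ] V →ₗ[ℂ] ℂ}

theorem Qmat_isUpperTriangular (γ : Fin n → V) : (Qmat B γ).IsUpperTriangular := by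
  intro i j (hji : j < i)
  simp [Qmat, hji.ne', not_lt_of_gt hji]

theorem det_Qmat (γ : Fin n → V) : (Qmat B γ).det = 1 := by
  rw [det_of_isUpperTriangular (Qmat_isUpperTriangular γ)]
  simp [Qmat]

variable {β : Fin n → V}

theorem gam_eq_add_sum (hB : ∀ x y, B x y = B y x) (hβ : ∀ j, B (β j) (β j) ≠ 0) (k : Fin n) :
    gam B β k = β k + ∑ j, (if j < k then cartan B (gam B β j) (gam B β k) else 0) • β j := by
  have hext : ∀ j : Fin n, gext β j = β j := fun j => by simp [gext]
  have hg : ∀ i < k.val, B (gext β i) (gext β i) ≠ 0 := fun i hi => by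
    simpa [gext, hi.trans k.isLt] using hβ ⟨i, hi.trans k.isLt⟩
  have hsum : ∑ j, (if j < k then cartan B (gam B β j) (gam B β k) else 0) • β j =
      ∑ i ∈ range n, if i < k.val then
        cartan B (reflL B (gext β) i (gext β i)) (gam B β k) • gext β i else 0 := by
    rw [← Fin.sum_univ_eq_sum_range]
    refine sum_congr rfl fun j _ => ?_
    simp only [ite_smul, zero_smul, hext, gam, Fin.lt_def]
  rw [hsum, ← sum_filter, show (range n).filter (· < k.val) = range k by ext; simp; omega]
  exact reflL_eq_add_sum hB hg (β k)

theorem betaLin_comp_Qmat (hB : ∀ x y, B x y = B y x) (hβ : ∀ j, B (β j) (β j) ≠ 0) :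
    betaLin β ∘ₗ (Qmat B (gam B β)).mulVecLin = betaLin (gam B β) := by
  refine (Pi.basisFun ℂ (Fin n)).ext fun k => ?_
  have hcol : ∀ j, Qmat B (gam B β) j k =
      (Pi.single k 1 : Fin n → ℂ) j + if j < k then cartan B (gam B β j) (gam B β k) else 0 := by
    intro j
    rcases lt_trichotomy j k with h | rfl | h
    · simp [Qmat, h, h.ne]
    · simp [Qmat]
    · simp [Qmat, h.ne', not_lt_of_gt h]
  simp only [LinearMap.comp_apply, Pi.basisFun_apply, mulVecLin_apply, mulVec_single_one]
  simp only [betaLin, LinearMap.coe_mk, AddHom.coe_mk, col_apply, hcol, add_smul, sum_add_distrib]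
  simpa using (gam_eq_add_sum hB hβ k).symm

end Datum

section Successor

open scoped Classical

variable {n : ℕ} {V : Type*} (γ : Fin n → V)

theorem mem_plusSet {j k : Fin n} : k ∈ plusSet γ j ↔ j < k ∧ γ k = γ j := by
  simp [plusSet]

theorem lt_min'_plusSet {j : Fin n} (h : (plusSet γ j).Nonempty) : j < (plusSet γ j).min' h :=
  ((mem_plusSet γ).1 ((plusSet γ j).min'_mem h)).1

theorem apply_min'_plusSet {j : Fin n} (h : (plusSet γ j).Nonempty) :
    γ ((plusSet γ j).min' h) = γ j :=
  ((mem_plusSet γ).1 ((plusSet γ j).min'_mem h)).2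

/-- The vector `e_j - e_{j⁺}`, so that `θ^{(j)} = Q (plusDiff γ j)`. -/
def plusDiff (j : Fin n) : Fin n → ℂ := Pi.single j 1 - eplus γ j

theorem plusDiff_of_nonempty {j : Fin n} (h : (plusSet γ j).Nonempty) :
    plusDiff γ j = Pi.single j 1 - Pi.single ((plusSet γ j).min' h) 1 := by
  simp [plusDiff, eplus, h]

/-- The indices outside `J` are exactly the last occurrences of the values of `γ`. -/
theorem card_plusSet_empty :
    Fintype.card {j // ¬(plusSet γ j).Nonempty} = Fintype.card (Set.range γ) := by
  refine Fintype.card_of_bijective (f := fun j => ⟨γ j, j, rfl⟩) ⟨?_, ?_⟩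
  · rintro ⟨j, hj⟩ ⟨k, hk⟩ hjk
    have hjk : γ j = γ k := congrArg Subtype.val hjk
    rcases lt_trichotomy j k with h | h | h
    · exact absurd ⟨k, (mem_plusSet γ).2 ⟨h, hjk.symm⟩⟩ hj
    · exact Subtype.ext h
    · exact absurd ⟨j, (mem_plusSet γ).2 ⟨h, hjk⟩⟩ hk
  · rintro ⟨_, i, rfl⟩
    have hfib : (univ.filter fun k => γ k = γ i).Nonempty := ⟨i, by simp⟩
    have hlast := (univ.filter fun k => γ k = γ i).max'_mem hfib
    refine ⟨⟨_, fun ⟨m, hm⟩ => ?_⟩, Subtype.ext (mem_filter.1 hlast).2⟩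
    obtain ⟨hlt, hm⟩ := (mem_plusSet γ).1 hm
    have hmi : γ m = γ i := hm.trans (mem_filter.1 hlast).2
    exact absurd (le_max' _ m (mem_filter.2 ⟨mem_univ m, hmi⟩)) (not_le.2 hlt)

theorem linearIndependent_plusDiff :
    LinearIndependent ℂ fun j : {j // (plusSet γ j).Nonempty} => plusDiff γ j := by
  set M : Matrix {j // (plusSet γ j).Nonempty} {j // (plusSet γ j).Nonempty} ℂ :=
    fun j i => plusDiff γ j i
  -- the coordinates indexed by `J` form a unitriangular matrix, since `j < j⁺`
  have hM : ∀ j i, i ≤ j → M j i = if i = j then 1 else 0 := by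
    intro j i hij
    have hne : (i : Fin n) ≠ (plusSet γ j).min' j.2 :=
      (lt_of_le_of_lt (show (i : Fin n) ≤ j from hij) (lt_min'_plusSet γ j.2)).ne
    simp [M, plusDiff_of_nonempty γ j.2, Pi.single_apply, hne, Subtype.ext_iff, eq_comm]
  have hdet : M.det = 1 := by
    rw [det_of_isUpperTriangular fun j i (hij : i < j) => by simp [hM j i hij.le, hij.ne]]
    exact prod_eq_one fun j _ => by simp [hM j j le_rfl]
  refine LinearIndependent.of_comp
    (LinearMap.funLeft ℂ ℂ (Subtype.val : {j // (plusSet γ j).Nonempty} → Fin n)) ?_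
  exact linearIndependent_rows_of_det_ne_zero (hdet ▸ one_ne_zero)

end Successor

section Kernel

open scoped Classical

variable {n : ℕ} {V : Type*} [AddCommGroup V] [Module ℂ V] (γ : Fin n → V)

theorem betaLin_eq_linearCombination : betaLin γ = Fintype.linearCombination ℂ γ :=
  LinearMap.ext fun w => (Fintype.linearCombination_apply ℂ γ w).symm

theorem betaLin_plusDiff {j : Fin n} (h : (plusSet γ j).Nonempty) :
    betaLin γ (plusDiff γ j) = 0 := by
  simp [betaLin_eq_linearCombination, plusDiff_of_nonempty γ h, apply_min'_plusSet γ h]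

theorem finrank_ker_betaLin (hγ : LinearIndependent ℂ (fun v : Set.range γ => (v : V))) :
    Module.finrank ℂ (LinearMap.ker (betaLin γ)) = Fintype.card {j // (plusSet γ j).Nonempty} := by
  have hrank := LinearMap.finrank_range_add_finrank_ker (betaLin γ)
  rw [betaLin_eq_linearCombination, Fintype.range_linearCombination,
    finrank_span_set_eq_card hγ, Set.toFinset_card, ← card_plusSet_empty γ,
    Fintype.card_subtype_compl, Fintype.card_fin, Module.finrank_fin_fun,
    ← betaLin_eq_linearCombination] at hrank
  have hJ := Fintype.card_subtype_le fun j => (plusSet γ j).Nonempty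
  rw [Fintype.card_fin] at hJ
  omega

theorem span_plusDiff (hγ : LinearIndependent ℂ (fun v : Set.range γ => (v : V))) :
    Submodule.span ℂ (Set.range fun j : {j // (plusSet γ j).Nonempty} => plusDiff γ j) =
      LinearMap.ker (betaLin γ) := by
  refine Submodule.eq_of_le_of_finrank_eq ?_ ?_
  · rw [Submodule.span_le]
    rintro _ ⟨j, rfl⟩
    exact betaLin_plusDiff γ j.2
  · rw [finrank_span_eq_card (linearIndependent_plusDiff γ), finrank_ker_betaLin γ hγ]

end Kernel

theorem stmt14_general (n : ℕ) {V : Type*} [AddCommGroup V] [Module ℂ V]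
    (B : V →ₗ[ℂ] V →ₗ[ℂ] ℂ) (hBsymm : ∀ x y, B x y = B y x)
    (β : Fin n → V) (hβ : ∀ j, B (β j) (β j) ≠ 0)
    (hdist : LinearIndependent ℂ (fun v : Set.range (gam B β) => (v : V))) :
    LinearIndependent ℂ
      (fun j : {j : Fin n // (plusSet (gam B β) j).Nonempty} => thetaC B β j.val) ∧
    Submodule.span ℂ
        (Set.range (fun j : {j : Fin n // (plusSet (gam B β) j).Nonempty} =>
          thetaC B β j.val)) =
      LinearMap.ker (betaLin β) := by
  let Q := Qmat B (gam B β)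
  have hQ : IsUnit Q := (isUnit_iff_isUnit_det Q).2 (by simp [Q, det_Qmat])
  have htheta : (fun j : {j // (plusSet (gam B β) j).Nonempty} => thetaC B β j) =
      Q.mulVecLin ∘ fun j : {j // (plusSet (gam B β) j).Nonempty} => plusDiff (gam B β) j :=
    rfl
  have hker :
      LinearMap.ker (betaLin (gam B β)) = (LinearMap.ker (betaLin β)).comap Q.mulVecLin := by
    rw [← betaLin_comp_Qmat hBsymm hβ, LinearMap.ker_comp]
  constructor
  · rw [htheta]
    exact (linearIndependent_plusDiff _).map' _
      (LinearMap.ker_eq_bot.2 (mulVec_injective_iff_isUnit.2 hQ))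
  · rw [htheta, Set.range_comp, ← Submodule.map_span, span_plusDiff _ hdist, hker,
      Submodule.map_comap_eq_of_surjective (mulVec_surjective_iff_isUnit.2 hQ)]

theorem stmt14 (n : ℕ) (hn : 0 < n) {V : Type*} [AddCommGroup V] [Module ℂ V]
    (B : V →ₗ[ℂ] V →ₗ[ℂ] ℂ) (hBsymm : ∀ x y, B x y = B y x)
    (β : Fin n → V) (hβ : ∀ j, B (β j) (β j) ≠ 0)
    (hdist : LinearIndependent ℂ (fun v : Set.range (gam B β) => (v : V))) :
    LinearIndependent ℂ
      (fun j : {j : Fin n // (plusSet (gam B β) j).Nonempty} => thetaC B β j.val) ∧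
    Submodule.span ℂ
        (Set.range (fun j : {j : Fin n // (plusSet (gam B β) j).Nonempty} =>
          thetaC B β j.val)) =
      LinearMap.ker (betaLin β) :=
  stmt14_general n B hBsymm β hβ hdist
end
end
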